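/- arXiv:1905.05876 — 3 statements merged into one kernel-verified Lean document; each statement's English description precedes it below -/
import Mathlib

section
/- Let U be a real-valued random variable that is not concentrated at a single point (i.e., P(U = u) < 1 for every real u), and let f, h : ℝ → ℝ be strictly increasing functions such that f(U) and h(U) are square-integrable. Then Cov(f(U), h(U)) > 0. -/
open MeasureTheory

lemma aux_integrable_mul {α : Type*} [MeasurableSpace α] {m : Measure α} [IsFiniteMeasure m]
    {a b : α → ℝ}
    (ha : MemLp a 2 m) (hb : MemLp b 2 m) : Integrable (fun x => a x * b x) m := by
  have hmem : MemLp (a • b) 1 m := by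
    exact MemLp.smul (p := 2) (q := 2) (r := 1) hb ha
  have := hmem.integrable le_rfl
  exact this

/-- Covariance of strictly increasing functions of a non-degenerate random
variable is strictly positive. -/
theorem stmt_0 {Ω : Type*} [MeasurableSpace Ω] (μ : Measure Ω) [IsProbabilityMeasure μ]
    (U : Ω → ℝ) (hU : Measurable U)
    (hnondeg : ∀ u : ℝ, μ {ω | U ω = u} < 1)
    (f h : ℝ → ℝ) (hf : StrictMono f) (hh : StrictMono h)
    (hfL2 : MemLp (fun ω => f (U ω)) 2 μ) (hhL2 : MemLp (fun ω => h (U ω)) 2 μ) :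
    0 < ∫ ω, f (U ω) * h (U ω) ∂μ - (∫ ω, f (U ω) ∂μ) * ∫ ω, h (U ω) ∂μ := by
  set F : Ω → ℝ := fun ω => f (U ω) with hF
  set H : Ω → ℝ := fun ω => h (U ω) with hH
  set ν : Measure (Ω × Ω) := μ.prod μ with hν
  haveI : IsProbabilityMeasure ν := by rw [hν]; infer_instance
  -- measure preserving projections
  have hmpf : MeasurePreserving (Prod.fst : Ω × Ω → Ω) ν μ :=
    ⟨measurable_fst, by simp [hν, Measure.map_fst_prod]⟩
  have hmps : MeasurePreserving (Prod.snd : Ω × Ω → Ω) ν μ :=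
    ⟨measurable_snd, by simp [hν, Measure.map_snd_prod]⟩
  -- L2 membership on the product
  have hF1 : MemLp (fun p : Ω × Ω => F p.1) 2 ν := hfL2.comp_measurePreserving hmpf
  have hF2 : MemLp (fun p : Ω × Ω => F p.2) 2 ν := hfL2.comp_measurePreserving hmps
  have hH1 : MemLp (fun p : Ω × Ω => H p.1) 2 ν := hhL2.comp_measurePreserving hmpf
  have hH2 : MemLp (fun p : Ω × Ω => H p.2) 2 ν := hhL2.comp_measurePreserving hmps
  -- the key function
  set g : Ω × Ω → ℝ := fun p => (F p.1 - F p.2) * (H p.1 - H p.2) with hg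
  have hi11 : Integrable (fun p : Ω × Ω => F p.1 * H p.1) ν := aux_integrable_mul hF1 hH1
  have hi12 : Integrable (fun p : Ω × Ω => F p.1 * H p.2) ν := aux_integrable_mul hF1 hH2
  have hi21 : Integrable (fun p : Ω × Ω => F p.2 * H p.1) ν := aux_integrable_mul hF2 hH1
  have hi22 : Integrable (fun p : Ω × Ω => F p.2 * H p.2) ν := aux_integrable_mul hF2 hH2
  have hgeq : g = fun p => F p.1 * H p.1 - F p.1 * H p.2 - F p.2 * H p.1 + F p.2 * H p.2 := by
    funext p; simp only [hg]; ring
  have hgi : Integrable g ν := by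
    rw [hgeq]
    exact ((hi11.sub hi12).sub hi21).add hi22
  -- compute the integral of g
  have h11 : ∫ p, F p.1 * H p.1 ∂ν = ∫ ω, F ω * H ω ∂μ := by
    have hm : AEStronglyMeasurable (fun ω => F ω * H ω) (Measure.map Prod.fst ν) := by
      rw [hmpf.map_eq]
      exact (aux_integrable_mul hfL2 hhL2).aestronglyMeasurable
    rw [← hmpf.map_eq, integral_map measurable_fst.aemeasurable hm]
  have h22 : ∫ p, F p.2 * H p.2 ∂ν = ∫ ω, F ω * H ω ∂μ := by
    have hm : AEStronglyMeasurable (fun ω => F ω * H ω) (Measure.map Prod.snd ν) := by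
      rw [hmps.map_eq]
      exact (aux_integrable_mul hfL2 hhL2).aestronglyMeasurable
    rw [← hmps.map_eq, integral_map measurable_snd.aemeasurable hm]
  have h12 : ∫ p, F p.1 * H p.2 ∂ν = (∫ ω, F ω ∂μ) * ∫ ω, H ω ∂μ := by
    rw [hν]; exact integral_prod_mul F H
  have h21 : ∫ p, F p.2 * H p.1 ∂ν = (∫ ω, F ω ∂μ) * ∫ ω, H ω ∂μ := by
    have : ∫ p : Ω × Ω, F p.2 * H p.1 ∂ν = ∫ p : Ω × Ω, H p.1 * F p.2 ∂ν := by
      congr 1; funext p; ring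
    rw [this, hν, integral_prod_mul H F, mul_comm]
  have hgint : ∫ p, g p ∂ν =
      2 * (∫ ω, F ω * H ω ∂μ - (∫ ω, F ω ∂μ) * ∫ ω, H ω ∂μ) := by
    have hiA : Integrable (fun p : Ω × Ω => F p.1 * H p.1 - F p.1 * H p.2) ν := hi11.sub hi12
    have hiB : Integrable
        (fun p : Ω × Ω => F p.1 * H p.1 - F p.1 * H p.2 - F p.2 * H p.1) ν := hiA.sub hi21
    rw [hgeq, integral_add hiB hi22, integral_sub hiA hi21, integral_sub hi11 hi12,
      h11, h12, h21, h22]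
    ring
  -- g is nonneg
  have hgnonneg : ∀ p, 0 ≤ g p := by
    intro p
    rcases lt_trichotomy (U p.1) (U p.2) with hlt | heq | hgt
    · exact le_of_lt (mul_pos_of_neg_of_neg (sub_neg.2 (hf hlt)) (sub_neg.2 (hh hlt)))
    · simp [hg, hF, hH, heq]
    · exact le_of_lt (mul_pos (sub_pos.2 (hf hgt)) (sub_pos.2 (hh hgt)))
  -- g is positive on the off-diagonal set
  have hgpos : ∀ p : Ω × Ω, U p.1 ≠ U p.2 → 0 < g p := by
    intro p hne
    rcases lt_or_gt_of_ne hne with hlt | hgt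
    · exact mul_pos_of_neg_of_neg (sub_neg.2 (hf hlt)) (sub_neg.2 (hh hlt))
    · exact mul_pos (sub_pos.2 (hf hgt)) (sub_pos.2 (hh hgt))
  -- the off-diagonal set has positive measure
  have hdm : MeasurableSet {p : Ω × Ω | U p.1 = U p.2} :=
    measurableSet_eq_fun (hU.comp measurable_fst) (hU.comp measurable_snd)
  have hdiag : ν {p : Ω × Ω | U p.1 = U p.2} < 1 := by
    rw [hν, Measure.prod_apply hdm]
    have hpre : ∀ x : Ω, Prod.mk x ⁻¹' {p : Ω × Ω | U p.1 = U p.2} = {ω | U ω = U x} := by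
      intro x; ext ω; simp [eq_comm]
    have hlt : ∀ x, μ (Prod.mk x ⁻¹' {p : Ω × Ω | U p.1 = U p.2}) < 1 := by
      intro x; rw [hpre x]; exact hnondeg (U x)
    have hfin : ∫⁻ x, μ (Prod.mk x ⁻¹' {p : Ω × Ω | U p.1 = U p.2}) ∂μ ≠ ⊤ := by
      have hle : ∫⁻ x, μ (Prod.mk x ⁻¹' {p : Ω × Ω | U p.1 = U p.2}) ∂μ ≤ ∫⁻ _, 1 ∂μ :=
        lintegral_mono fun x => (hlt x).le
      refine ne_top_of_le_ne_top ?_ hle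
      simp
    calc ∫⁻ x, μ (Prod.mk x ⁻¹' {p : Ω × Ω | U p.1 = U p.2}) ∂μ
        < ∫⁻ _, 1 ∂μ := by
          refine lintegral_strict_mono ?_ aemeasurable_const hfin
            (Filter.Eventually.of_forall hlt)
          exact IsProbabilityMeasure.ne_zero μ
      _ = 1 := by simp
  have hoff : 0 < ν {p : Ω × Ω | U p.1 ≠ U p.2} := by
    have hcompl : {p : Ω × Ω | U p.1 ≠ U p.2} = {p : Ω × Ω | U p.1 = U p.2}ᶜ := rfl
    rw [hcompl, measure_compl hdm (measure_ne_top ν _)]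
    simp only [measure_univ]
    exact tsub_pos_of_lt hdiag
  -- positivity of the integral
  have hsupp : {p : Ω × Ω | U p.1 ≠ U p.2} ⊆ Function.support g := by
    intro p hp
    exact ne_of_gt (hgpos p hp)
  have hpos : 0 < ∫ p, g p ∂ν := by
    rw [integral_pos_iff_support_of_nonneg hgnonneg hgi]
    exact lt_of_lt_of_le hoff (measure_mono hsupp)
  rw [hgint] at hpos
  linarith
end

section
/- Suppose (X_1,Y_1),…,(X_n,Y_n) are i.i.d. with E X_1 = 0 and H = E[X_1 X_1'] positive definite, and let θ⁰ be the unique minimizer over θ ∈ ℝ^p of E Q(θ) with Q(θ) = (1/(2n)) Σ_i (R_i/n − θ'X_i)². Then θ⁰ = ((n−1)/n) H^{-1} μ, where μ = E[𝟙(Y_2 ≤ Y_1) X_1]. -/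
open MeasureTheory ProbabilityTheory Finset

/-- The minimizer of the expected rank quadratic risk is
`θ⁰ = ((n−1)/n) H⁻¹ μ` with `μ = E[𝟙(Y₂ ≤ Y₁) X₁]`. -/
theorem stmt_4 {Ω : Type*} [MeasurableSpace Ω] (μ : Measure Ω) [IsProbabilityMeasure μ]
    {n p : ℕ} (hn : 2 ≤ n)
    (X : Fin n → Ω → Fin p → ℝ) (Y : Fin n → Ω → ℝ)
    (hX : ∀ i, Measurable (X i)) (hY : ∀ i, Measurable (Y i))
    -- i.i.d. pairs (X_i, Y_i)
    (hIndep : iIndepFun (fun i ω => (X i ω, Y i ω)) μ)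
    (hid : ∀ i, Measure.map (fun ω => (X i ω, Y i ω)) μ
      = Measure.map (fun ω => (X ⟨0, by omega⟩ ω, Y ⟨0, by omega⟩ ω)) μ)
    -- centred predictors
    (hcentred : ∀ j, ∫ ω, X ⟨0, by omega⟩ ω j ∂μ = 0)
    -- H = E X₁X₁' is positive definite
    (H : Matrix (Fin p) (Fin p) ℝ)
    (hH : ∀ j k, H j k = ∫ ω, X ⟨0, by omega⟩ ω j * X ⟨0, by omega⟩ ω k ∂μ)
    (hHpd : H.PosDef)
    -- μ = E[𝟙(Y₂ ≤ Y₁) X₁]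
    (muvec : Fin p → ℝ)
    (hmu : ∀ j, muvec j = ∫ ω,
      (if Y ⟨1, by omega⟩ ω ≤ Y ⟨0, by omega⟩ ω then (1 : ℝ) else 0)
        * X ⟨0, by omega⟩ ω j ∂μ)
    -- ranks
    (R : Fin n → Ω → ℝ)
    (hR : ∀ i ω, R i ω = ∑ j, if Y j ω ≤ Y i ω then (1 : ℝ) else 0)
    (hint : ∀ θ : Fin p → ℝ, ∀ i, Integrable
      (fun ω => (R i ω / n - ∑ j, θ j * X i ω j) ^ 2) μ)
    -- θ⁰ minimizes the expected risk E Q(θ)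
    (θ0 : Fin p → ℝ)
    (hmin : ∀ θ : Fin p → ℝ,
      ∫ ω, (1 / (2 * n) * ∑ i, (R i ω / n - ∑ j, θ0 j * X i ω j) ^ 2) ∂μ
        ≤ ∫ ω, (1 / (2 * n) * ∑ i, (R i ω / n - ∑ j, θ j * X i ω j) ^ 2) ∂μ) :
    θ0 = ((n - 1 : ℝ) / n) • (H⁻¹.mulVec muvec) := by
  have h0n : 0 < n := by omega
  have h1n : 1 < n := by omega
  set i0 : Fin n := ⟨0, h0n⟩ with hi0
  set i1 : Fin n := ⟨1, h1n⟩ with hi1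
  have hnR : (0:ℝ) < (n:ℝ) := by exact_mod_cast h0n
  set c : ℝ := ((n:ℝ) - 1) / n with hc
  -- measurability
  have hXk : ∀ i k, Measurable (fun ω => X i ω k) :=
    fun i k => (measurable_pi_apply k).comp (hX i)
  have hZ : ∀ i, Measurable (fun ω => (X i ω, Y i ω)) :=
    fun i => (hX i).prodMk (hY i)
  -- integrability of R²/n²
  have hRsq : ∀ i, Integrable (fun ω => (R i ω / n) ^ 2) μ := by
    intro i; simpa using hint 0 i
  -- single coordinate sums
  have hsingle : ∀ (k : Fin p) (ω : Ω) (i : Fin n) (t : ℝ),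
      (∑ j, (fun j' => if j' = k then t else 0) j * X i ω j) = t * X i ω k := by
    intro k ω i t
    rw [Finset.sum_eq_single k]
    · simp
    · intro b _ hb; simp [hb]
    · simp
  -- integrability of X i ω k squared
  have hXsq : ∀ i k, Integrable (fun ω => (X i ω k) ^ 2) μ := by
    intro i k
    have hplus : Integrable (fun ω => (R i ω / n - X i ω k) ^ 2) μ := by
      have := hint (fun j' => if j' = k then (1:ℝ) else 0) i
      have h2 : ∀ ω, (R i ω / n - ∑ j, (fun j' => if j' = k then (1:ℝ) else 0) j * X i ω j)
          = R i ω / n - X i ω k := by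
        intro ω; rw [hsingle k ω i 1]; ring
      simpa [h2] using this
    have hminus : Integrable (fun ω => (R i ω / n + X i ω k) ^ 2) μ := by
      have := hint (fun j' => if j' = k then (-1:ℝ) else 0) i
      have h2 : ∀ ω, (R i ω / n - ∑ j, (fun j' => if j' = k then (-1:ℝ) else 0) j * X i ω j)
          = R i ω / n + X i ω k := by
        intro ω; rw [hsingle k ω i (-1)]; ring
      simpa [h2] using this
    have hcomb := (((hplus.add hminus).sub ((hRsq i).const_mul 2)).const_mul (1/2))
    have heq : (fun ω => (X i ω k) ^ 2)
        = fun ω => 1/2 * ((R i ω / n - X i ω k) ^ 2 + (R i ω / n + X i ω k) ^ 2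
            - 2 * (R i ω / n) ^ 2) := by
      funext ω; ring
    rw [heq]; exact hcomb
  have hXint : ∀ i k, Integrable (fun ω => X i ω k) μ := by
    intro i k
    refine Integrable.mono' ((hXsq i k).add (integrable_const 1)) (hXk i k).aestronglyMeasurable
      (Filter.Eventually.of_forall fun ω => ?_)
    have := sq_nonneg (|X i ω k| - 1)
    simp only [Pi.add_apply]
    rw [Real.norm_eq_abs]
    nlinarith [sq_abs (X i ω k), abs_nonneg (X i ω k)]
  have hXXint : ∀ i j k, Integrable (fun ω => X i ω j * X i ω k) μ := by
    intro i j k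
    refine Integrable.mono' (((hXsq i j).add (hXsq i k)).const_mul (1/2))
      ((hXk i j).mul (hXk i k)).aestronglyMeasurable
      (Filter.Eventually.of_forall fun ω => ?_)
    simp only [Pi.add_apply]
    rw [Real.norm_eq_abs, abs_mul]
    nlinarith [sq_nonneg (|X i ω j| - |X i ω k|), sq_abs (X i ω j), sq_abs (X i ω k),
      abs_nonneg (X i ω j), abs_nonneg (X i ω k)]
  -- bounds on R
  have hRbd : ∀ i ω, 0 ≤ R i ω ∧ R i ω ≤ n := by
    intro i ω
    constructor
    · rw [hR i ω]; exact Finset.sum_nonneg fun j _ => by positivity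
    · rw [hR i ω]
      calc (∑ j, if Y j ω ≤ Y i ω then (1:ℝ) else 0) ≤ ∑ _j : Fin n, (1:ℝ) := by
            refine Finset.sum_le_sum fun j _ => ?_
            split <;> norm_num
        _ = n := by simp
  have hRXint : ∀ i k, Integrable (fun ω => R i ω / n * X i ω k) μ := by
    intro i k
    refine Integrable.mono' (hXint i k).abs ?_ (Filter.Eventually.of_forall fun ω => ?_)
    · refine (Measurable.mul ?_ (hXk i k)).aestronglyMeasurable
      have : Measurable (R i) := by
        have : R i = fun ω => ∑ j, if Y j ω ≤ Y i ω then (1:ℝ) else 0 := by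
          funext ω; exact hR i ω
        rw [this]
        exact Finset.measurable_sum _ fun j _ =>
          Measurable.ite (measurableSet_le (hY j) (hY i)) measurable_const measurable_const
      exact this.div_const _
    · rw [Real.norm_eq_abs, abs_mul]
      have h1 : |R i ω / n| ≤ 1 := by
        rw [abs_div, abs_of_nonneg (hRbd i ω).1, abs_of_pos hnR]
        rw [div_le_one hnR]; exact (hRbd i ω).2
      calc |R i ω / ↑n| * |X i ω k| ≤ 1 * |X i ω k| :=
            mul_le_mul_of_nonneg_right h1 (abs_nonneg _)
        _ = |X i ω k| := one_mul _
  have hIndXint : ∀ i j k, Integrable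
      (fun ω => (if Y j ω ≤ Y i ω then (1:ℝ) else 0) * X i ω k) μ := by
    intro i j k
    refine Integrable.mono' (hXint i k).abs ?_ (Filter.Eventually.of_forall fun ω => ?_)
    · exact ((Measurable.ite (measurableSet_le (hY j) (hY i)) measurable_const
        measurable_const).mul (hXk i k)).aestronglyMeasurable
    · rw [Real.norm_eq_abs, abs_mul]
      have : |if Y j ω ≤ Y i ω then (1:ℝ) else 0| ≤ 1 := by split <;> norm_num
      calc |if Y j ω ≤ Y i ω then (1:ℝ) else 0| * |X i ω k| ≤ 1 * |X i ω k| :=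
            mul_le_mul_of_nonneg_right this (abs_nonneg _)
        _ = |X i ω k| := one_mul _
  -- identical distribution transfer
  have hident : ∀ (i : Fin n) (f : (Fin p → ℝ) × ℝ → ℝ), Measurable f →
      ∫ ω, f (X i ω, Y i ω) ∂μ = ∫ ω, f (X i0 ω, Y i0 ω) ∂μ := by
    intro i f hf
    rw [← integral_map (hZ i).aemeasurable hf.aestronglyMeasurable, hid i,
      integral_map (hZ i0).aemeasurable hf.aestronglyMeasurable]
  have hXzero : ∀ i k, ∫ ω, X i ω k ∂μ = 0 := by
    intro i k
    have := hident i (fun q => q.1 k) ((measurable_pi_apply k).comp measurable_fst)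
    exact this.trans (hcentred k)
  have hHeq : ∀ i j k, ∫ ω, X i ω j * X i ω k ∂μ = H j k := by
    intro i j k
    have := hident i (fun q => q.1 j * q.1 k)
      (((measurable_pi_apply j).comp measurable_fst).mul
        ((measurable_pi_apply k).comp measurable_fst))
    rw [hH j k]; exact this
  -- independence: cross indicator terms
  have key2 : ∀ (i j : Fin n), i ≠ j → ∀ k,
      ∫ ω, (if Y j ω ≤ Y i ω then (1:ℝ) else 0) * X i ω k ∂μ = muvec k := by
    intro i j hij k
    set F : ((Fin p → ℝ) × ℝ) × ((Fin p → ℝ) × ℝ) → ℝ :=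
      fun q => (if q.2.2 ≤ q.1.2 then (1:ℝ) else 0) * q.1.1 k with hF
    have hFmeas : Measurable F := by
      refine Measurable.mul ?_ ((measurable_pi_apply k).comp (measurable_fst.comp measurable_fst))
      exact Measurable.ite (measurableSet_le (measurable_snd.comp measurable_snd)
        (measurable_snd.comp measurable_fst)) measurable_const measurable_const
    haveI : IsProbabilityMeasure (μ.map (fun ω => (X i0 ω, Y i0 ω))) :=
      Measure.isProbabilityMeasure_map (hZ i0).aemeasurable
    have pairmap : ∀ (a b : Fin n), a ≠ b →
        μ.map (fun ω => ((X a ω, Y a ω), (X b ω, Y b ω)))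
          = (μ.map (fun ω => (X i0 ω, Y i0 ω))).prod (μ.map (fun ω => (X i0 ω, Y i0 ω))) := by
      intro a b hab
      have hind : IndepFun (fun ω => (X a ω, Y a ω)) (fun ω => (X b ω, Y b ω)) μ :=
        hIndep.indepFun hab
      have := (indepFun_iff_map_prod_eq_prod_map_map (hZ a).aemeasurable
        (hZ b).aemeasurable).1 hind
      rw [hid a, hid b] at this
      exact this
    have e1 : ∀ (a b : Fin n), a ≠ b →
        ∫ ω, F ((X a ω, Y a ω), (X b ω, Y b ω)) ∂μ
          = ∫ q, F q ∂((μ.map (fun ω => (X i0 ω, Y i0 ω))).prod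
              (μ.map (fun ω => (X i0 ω, Y i0 ω)))) := by
      intro a b hab
      rw [← integral_map ((hZ a).prodMk (hZ b)).aemeasurable hFmeas.aestronglyMeasurable,
        pairmap a b hab]
    have h01 : i0 ≠ i1 := by
      intro h; have := Fin.mk.inj_iff.mp h; omega
    have := (e1 i j hij).trans (e1 i0 i1 h01).symm
    simp only [hF] at this
    rw [this, ← hmu k]
  -- the rank cross term
  have hcross : ∀ i k, ∫ ω, R i ω / n * X i ω k ∂μ = c * muvec k := by
    intro i k
    have heq : (fun ω => R i ω / n * X i ω k)
        = fun ω => ∑ j, (n:ℝ)⁻¹ * ((if Y j ω ≤ Y i ω then (1:ℝ) else 0) * X i ω k) := by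
      funext ω
      rw [hR i ω, Finset.sum_div, Finset.sum_mul]
      exact Finset.sum_congr rfl fun j _ => by ring
    rw [heq, integral_finset_sum _ (fun j _ => ((hIndXint i j k).const_mul _))]
    simp only [integral_const_mul]
    rw [← Finset.sum_erase_add _ _ (Finset.mem_univ i)]
    have hterm_i : ∫ ω, (if Y i ω ≤ Y i ω then (1:ℝ) else 0) * X i ω k ∂μ = 0 := by
      simp only [le_refl, if_true, one_mul]
      exact hXzero i k
    have hterms : ∀ j ∈ Finset.univ.erase i,
        (n:ℝ)⁻¹ * ∫ ω, (if Y j ω ≤ Y i ω then (1:ℝ) else 0) * X i ω k ∂μ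
          = (n:ℝ)⁻¹ * muvec k := by
      intro j hj
      rw [key2 i j (Finset.ne_of_mem_erase hj).symm k]
    rw [Finset.sum_congr rfl hterms, Finset.sum_const, hterm_i, mul_zero, add_zero,
      Finset.card_erase_of_mem (Finset.mem_univ i), Finset.card_univ, Fintype.card_fin,
      nsmul_eq_mul]
    rw [Nat.cast_sub (by omega : 1 ≤ n), Nat.cast_one, hc]
    field_simp
  -- per-i expansion
  have key_i : ∀ (θ : Fin p → ℝ) (i : Fin n),
      ∫ ω, (R i ω / n - ∑ j, θ j * X i ω j) ^ 2 ∂μ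
        = ∫ ω, (R i ω / n) ^ 2 ∂μ - 2 * c * (∑ j, θ j * muvec j)
          + ∑ j, ∑ k, θ j * θ k * H j k := by
    intro θ i
    have h1 : Integrable (fun ω => ∑ j, 2 * θ j * (R i ω / n * X i ω j)) μ :=
      integrable_finset_sum _ fun j _ => (hRXint i j).const_mul _
    have h2 : Integrable (fun ω => ∑ j, ∑ k, θ j * θ k * (X i ω j * X i ω k)) μ :=
      integrable_finset_sum _ fun j _ =>
        integrable_finset_sum _ fun k _ => (hXXint i j k).const_mul _
    have heq : (fun ω => (R i ω / ↑n - ∑ j, θ j * X i ω j) ^ 2)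
        = fun ω => (R i ω / ↑n) ^ 2 - (∑ j, 2 * θ j * (R i ω / ↑n * X i ω j))
            + ∑ j, ∑ k, θ j * θ k * (X i ω j * X i ω k) := by
      funext ω
      have hsq : (∑ j, θ j * X i ω j) ^ 2 = ∑ j, ∑ k, θ j * θ k * (X i ω j * X i ω k) := by
        rw [sq, Finset.sum_mul_sum]
        exact Finset.sum_congr rfl fun j _ => Finset.sum_congr rfl fun k _ => by ring
      have hlin : 2 * (R i ω / ↑n) * (∑ j, θ j * X i ω j)
          = ∑ j, 2 * θ j * (R i ω / ↑n * X i ω j) := by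
        rw [Finset.mul_sum]
        exact Finset.sum_congr rfl fun j _ => by ring
      rw [sub_sq, hsq, hlin]
    have hf1 : Integrable (fun ω => (R i ω / ↑n) ^ 2
        - ∑ j, 2 * θ j * (R i ω / ↑n * X i ω j)) μ := (hRsq i).sub h1
    rw [heq, integral_add hf1 h2]
    rw [integral_sub (hRsq i) h1,
      integral_finset_sum _ (fun j _ => (hRXint i j).const_mul _),
      integral_finset_sum _ (fun j _ =>
        integrable_finset_sum _ fun k _ => (hXXint i j k).const_mul _)]
    have t1 : ∀ j ∈ Finset.univ, ∫ ω, 2 * θ j * (R i ω / ↑n * X i ω j) ∂μ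
        = 2 * θ j * (c * muvec j) := fun j _ => by
      rw [integral_const_mul, hcross i j]
    have t2 : ∀ j ∈ Finset.univ, ∫ ω, ∑ k, θ j * θ k * (X i ω j * X i ω k) ∂μ
        = ∑ k, θ j * θ k * H j k := fun j _ => by
      rw [integral_finset_sum _ (fun k _ => (hXXint i j k).const_mul _)]
      exact Finset.sum_congr rfl fun k _ => by rw [integral_const_mul, hHeq i j k]
    rw [Finset.sum_congr rfl t1, Finset.sum_congr rfl t2]
    have t3 : (∑ j, 2 * θ j * (c * muvec j)) = 2 * c * ∑ j, θ j * muvec j := by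
      rw [Finset.mul_sum]
      exact Finset.sum_congr rfl fun j _ => by ring
    rw [t3]
  -- global risk expansion
  set φ : (Fin p → ℝ) → ℝ :=
    fun θ => -(c * (∑ j, θ j * muvec j)) + 1/2 * ∑ j, ∑ k, θ j * θ k * H j k with hφdef
  set C : ℝ := 1 / (2 * (n:ℝ)) * ∑ i, ∫ ω, (R i ω / n) ^ 2 ∂μ with hC
  have hg : ∀ θ : Fin p → ℝ,
      ∫ ω, (1 / (2 * n) * ∑ i, (R i ω / n - ∑ j, θ j * X i ω j) ^ 2) ∂μ = C + φ θ := by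
    intro θ
    rw [integral_const_mul, integral_finset_sum _ (fun i _ => hint θ i)]
    have : ∀ i ∈ Finset.univ, ∫ ω, (R i ω / ↑n - ∑ j, θ j * X i ω j) ^ 2 ∂μ
        = ∫ ω, (R i ω / n) ^ 2 ∂μ + (- (2 * c * ∑ j, θ j * muvec j)
            + ∑ j, ∑ k, θ j * θ k * H j k) := fun i _ => by rw [key_i θ i]; ring
    rw [Finset.sum_congr rfl this, Finset.sum_add_distrib, Finset.sum_const, Finset.card_univ,
      Fintype.card_fin, nsmul_eq_mul, mul_add, hφdef, hC]
    field_simp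
  have hφmin : ∀ θ : Fin p → ℝ, φ θ0 ≤ φ θ := by
    intro θ
    have := hmin θ
    rw [hg θ0, hg θ] at this
    linarith
  -- symmetry of H
  have Hsym : ∀ j k, H j k = H k j := by
    intro j k
    have := (hHpd.1.apply j k).symm
    simpa using this
  -- the gradient
  set G : Fin p → ℝ := fun j => (∑ k, H j k * θ0 k) - c * muvec j with hG
  have hquad : ∀ t : ℝ, φ (fun j => θ0 j + t * G j)
      = φ θ0 + t * (∑ j, G j * G j) + t ^ 2 / 2 * (∑ j, ∑ k, G j * G k * H j k) := by
    intro t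
    have hL : (∑ j, (θ0 j + t * G j) * muvec j)
        = (∑ j, θ0 j * muvec j) + t * (∑ j, G j * muvec j) := by
      rw [Finset.mul_sum, ← Finset.sum_add_distrib]
      exact Finset.sum_congr rfl fun j _ => by ring
    have hS : (∑ j, ∑ k, (θ0 j + t * G j) * (θ0 k + t * G k) * H j k)
        = (∑ j, ∑ k, θ0 j * θ0 k * H j k) + t * (∑ j, ∑ k, θ0 j * G k * H j k)
          + t * (∑ j, ∑ k, G j * θ0 k * H j k) + t ^ 2 * (∑ j, ∑ k, G j * G k * H j k) := by
      calc (∑ j, ∑ k, (θ0 j + t * G j) * (θ0 k + t * G k) * H j k)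
          = ∑ j, ∑ k, (θ0 j * θ0 k * H j k + t * (θ0 j * G k * H j k)
              + t * (G j * θ0 k * H j k) + t ^ 2 * (G j * G k * H j k)) :=
            Finset.sum_congr rfl fun j _ => Finset.sum_congr rfl fun k _ => by ring
        _ = _ := by simp only [Finset.sum_add_distrib, ← Finset.mul_sum]
    have hsym2 : (∑ j, ∑ k, θ0 j * G k * H j k) = ∑ j, ∑ k, G j * θ0 k * H j k := by
      rw [Finset.sum_comm]
      exact Finset.sum_congr rfl fun j _ => Finset.sum_congr rfl fun k _ => by
        rw [Hsym k j]; ring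
    have hGHθ : (∑ j, ∑ k, G j * θ0 k * H j k) = ∑ j, G j * (∑ k, H j k * θ0 k) := by
      refine Finset.sum_congr rfl fun j _ => ?_
      rw [Finset.mul_sum]
      exact Finset.sum_congr rfl fun k _ => by ring
    have hGG : (∑ j, G j * G j)
        = (∑ j, G j * (∑ k, H j k * θ0 k)) - c * (∑ j, G j * muvec j) := by
      rw [Finset.mul_sum, ← Finset.sum_sub_distrib]
      refine Finset.sum_congr rfl fun j _ => ?_
      rw [hG]; ring
    simp only [hφdef]
    rw [hL, hS, hsym2, hGHθ, hGG]
    ring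
  -- conclude G = 0
  have hGzero : G = 0 := by
    by_contra hne
    have hq : 0 < ∑ j, ∑ k, G j * G k * H j k := by
      have := hHpd.dotProduct_mulVec_pos hne
      have hd : dotProduct (star G) (H.mulVec G) = ∑ j, ∑ k, G j * G k * H j k := by
        simp only [star_trivial, dotProduct, Matrix.mulVec, Finset.mul_sum]
        exact Finset.sum_congr rfl fun j _ => Finset.sum_congr rfl fun k _ => by ring
      rwa [hd] at this
    have hs : 0 < ∑ j, G j * G j := by
      have hex : ∃ j, G j ≠ 0 := by
        by_contra h
        push_neg at h
        exact hne (funext fun j => h j)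
      obtain ⟨j, hj⟩ := hex
      have h1 : (0:ℝ) < G j * G j := mul_self_pos.mpr hj
      have h2 : ∀ k ∈ Finset.univ, (0:ℝ) ≤ G k * G k := fun k _ => mul_self_nonneg _
      calc (0:ℝ) < G j * G j := h1
        _ ≤ ∑ k, G k * G k := Finset.single_le_sum h2 (Finset.mem_univ j)
    set s : ℝ := ∑ j, G j * G j with hsdef
    set q : ℝ := ∑ j, ∑ k, G j * G k * H j k with hqdef
    have := hφmin (fun j => θ0 j + (-(s/q)) * G j)
    rw [hquad (-(s/q))] at this
    have h1 : 0 ≤ (-(s/q)) * s + (-(s/q)) ^ 2 / 2 * q := by linarith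
    have h2 : (-(s/q)) * s + (-(s/q)) ^ 2 / 2 * q = -(s^2 / (2*q)) := by
      field_simp
      ring
    rw [h2] at h1
    have h3 : 0 < s ^ 2 / (2 * q) := by positivity
    linarith
  -- finish with matrix algebra
  have hmv : H.mulVec θ0 = c • muvec := by
    funext j
    have : G j = 0 := by rw [hGzero]; rfl
    rw [hG] at this
    simp only [Matrix.mulVec, dotProduct, Pi.smul_apply, smul_eq_mul]
    simp only [Pi.sub_apply] at this
    linarith [this]
  have hdet : IsUnit H.det := hHpd.det_pos.ne'.isUnit
  have : θ0 = H⁻¹.mulVec (H.mulVec θ0) := by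
    rw [Matrix.mulVec_mulVec, Matrix.nonsing_inv_mul H hdet, Matrix.one_mulVec]
  rw [this, hmv, Matrix.mulVec_smul]
end

section
/- Suppose an estimator θ̂ satisfies |θ̂ − θ⁰|_∞ ≤ c for some c > 0, and let θ⁰_min = min_{j ∈ T} |θ⁰_j| where T = supp(θ⁰). If a threshold δ satisfies c < δ ≤ θ⁰_min/2, then the thresholded estimator θ̂^{th}_j = θ̂_j 𝟙(|θ̂_j| ≥ δ) has support exactly T, i.e., {j : θ̂^{th}_j ≠ 0} = T. -/
open Finset

section HardThreshold

variable {α : Type*} [AddCommGroup α] [LinearOrder α] [IsOrderedAddMonoid α]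

def hardThreshold (δ x : α) : α := if δ ≤ |x| then x else 0

theorem hardThreshold_ne_zero_iff {δ x : α} (hδ : 0 < δ) : hardThreshold δ x ≠ 0 ↔ δ ≤ |x| := by
  unfold hardThreshold
  split_ifs with h
  · refine iff_of_true ?_ h
    rintro rfl
    rw [abs_zero] at h
    exact h.not_gt hδ
  · exact iff_of_false (fun h0 => h0 rfl) h

theorem hardThreshold_ne_zero_iff_of_abs_sub_le {c δ x y : α} (hxy : |x - y| ≤ c) (hcδ : c < δ)
    (hy : y ≠ 0 → c + δ ≤ |y|) : hardThreshold δ x ≠ 0 ↔ y ≠ 0 := by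
  have hδ : 0 < δ := (abs_nonneg _).trans hxy |>.trans_lt hcδ
  rw [hardThreshold_ne_zero_iff hδ]
  constructor
  · rintro hx rfl
    rw [sub_zero] at hxy
    exact (hx.trans hxy).not_gt hcδ
  · intro hy0
    have hyx : |y| - |x| ≤ c := (abs_sub_abs_le_abs_sub y x).trans (abs_sub_comm y x ▸ hxy)
    calc δ ≤ |y| - c := le_sub_iff_add_le'.2 (hy hy0)
      _ ≤ |x| := sub_le_comm.1 hyx

end HardThreshold

theorem stmt_18_general {p : ℕ} (θhat θ0 : Fin p → ℝ) (c δ : ℝ)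
    (T : Finset (Fin p)) (hT : T = {j | θ0 j ≠ 0})
    (hTne : T.Nonempty)
    (hbound : ∀ j, |θhat j - θ0 j| ≤ c)
    (hδ1 : c < δ) (hδ2 : δ ≤ (T.inf' hTne fun j => |θ0 j|) / 2)
    (θth : Fin p → ℝ) (hθth : ∀ j, θth j = if |θhat j| ≥ δ then θhat j else 0) :
    {j | θth j ≠ 0} = {j | θ0 j ≠ 0} := by
  ext j
  have hmin : θ0 j ≠ 0 → c + δ ≤ |θ0 j| := fun hj => by
    have hjT : j ∈ T := by rw [← mem_coe, hT]; exact hj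
    have hθmin := T.inf'_le (fun i => |θ0 i|) hjT
    linarith
  show θth j ≠ 0 ↔ θ0 j ≠ 0
  rw [hθth j]
  exact hardThreshold_ne_zero_iff_of_abs_sub_le (hbound j) hδ1 hmin

/-- Thresholding recovers the support: if `|θ̂ - θ⁰|_∞ ≤ c` and the threshold
`δ` satisfies `c < δ ≤ θ⁰_min / 2`, then the support of the thresholded
estimator equals the support of `θ⁰`. -/
theorem stmt_18 {p : ℕ} (θhat θ0 : Fin p → ℝ) (c δ : ℝ) (hc : 0 < c)
    (T : Finset (Fin p)) (hT : T = {j | θ0 j ≠ 0})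
    (hTne : T.Nonempty)
    (hbound : ∀ j, |θhat j - θ0 j| ≤ c)
    (hδ1 : c < δ) (hδ2 : δ ≤ (T.inf' hTne fun j => |θ0 j|) / 2)
    (θth : Fin p → ℝ) (hθth : ∀ j, θth j = if |θhat j| ≥ δ then θhat j else 0) :
    {j | θth j ≠ 0} = {j | θ0 j ≠ 0} :=
  stmt_18_general θhat θ0 c δ T hT hTne hbound hδ1 hδ2 θth hθth
end
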